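/- Let n ≥ 1, let μ > 0 be a real constant, and let C₁, C₂ : ℝ × ℝⁿ → ℝ be smooth functions such that for every compact time interval I there is a compact set K ⊆ ℝⁿ containing the spatial supports of C₁(t,·) and C₂(t,·) for all t ∈ I. Suppose ∂₀C₁ = C₂ and ∂₀C₂ = −μ·C₁ + ΔC₁ on ℝ × ℝⁿ, and C₁(0,·) = 0 and C₂(0,·) = 0. Then C₁ ≡ 0 and C₂ ≡ 0 on ℝ × ℝⁿ. -/

import Mathlib

open scoped BigOperators

/-- Partial derivative in the time direction `x⁰` on `ℝ × ℝⁿ`. -/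
noncomputable def pd0 {n : ℕ} (f : ℝ × (Fin n → ℝ) → ℝ) (p : ℝ × (Fin n → ℝ)) : ℝ :=
  deriv (fun s => f (s, p.2)) p.1

/-- Partial derivative in the spatial direction `xⁱ` on `ℝ × ℝⁿ`. -/
noncomputable def pdS {n : ℕ} (i : Fin n) (f : ℝ × (Fin n → ℝ) → ℝ)
    (p : ℝ × (Fin n → ℝ)) : ℝ :=
  deriv (fun s => f (p.1, Function.update p.2 i s)) (p.2 i)

/-- Spatial Laplacian `Δf = Σᵢ ∂ᵢ²f` on `ℝ × ℝⁿ`. -/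
noncomputable def lapS {n : ℕ} (f : ℝ × (Fin n → ℝ) → ℝ)
    (p : ℝ × (Fin n → ℝ)) : ℝ :=
  ∑ i : Fin n, pdS i (pdS i f) p

open MeasureTheory

namespace CPU

variable {n : ℕ}

/-- Spatial directional derivative as a function. -/
noncomputable def sgrad (i : Fin n) (f : ℝ × (Fin n → ℝ) → ℝ) (p : ℝ × (Fin n → ℝ)) : ℝ :=
  fderiv ℝ f p ((0 : ℝ), Pi.single i 1)

lemma hasDerivAt_update (x : Fin n → ℝ) (i : Fin n) (s : ℝ) :
    HasDerivAt (fun s : ℝ => Function.update x i s) (Pi.single i 1 : Fin n → ℝ) s := by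
  have h : (fun s : ℝ => Function.update x i s)
      = fun s : ℝ => x + (s - x i) • (Pi.single i 1 : Fin n → ℝ) := by
    ext s j
    rcases eq_or_ne j i with rfl | hj
    · simp
    · simp [Function.update_of_ne hj, Pi.single_eq_of_ne hj]
  rw [h]
  simpa using (((hasDerivAt_id s).sub_const (x i)).smul_const ((Pi.single i 1 : Fin n → ℝ))).const_add x

lemma hasDerivAt_pdS {f : ℝ × (Fin n → ℝ) → ℝ} (hf : Differentiable ℝ f) (i : Fin n)
    (p : ℝ × (Fin n → ℝ)) :
    HasDerivAt (fun s => f (p.1, Function.update p.2 i s)) (sgrad i f p) (p.2 i) := by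
  have h1 : HasDerivAt (fun s : ℝ => (p.1, Function.update p.2 i s))
      (((0 : ℝ), Pi.single i 1) : ℝ × (Fin n → ℝ)) (p.2 i) :=
    (hasDerivAt_const _ _).prodMk (hasDerivAt_update p.2 i (p.2 i))
  have hfp : HasFDerivAt f (fderiv ℝ f p) (p.1, Function.update p.2 i (p.2 i)) := by
    rw [Function.update_eq_self]
    exact (hf p).hasFDerivAt
  exact hfp.comp_hasDerivAt (p.2 i) h1

lemma pdS_eq {f : ℝ × (Fin n → ℝ) → ℝ} (hf : Differentiable ℝ f) (i : Fin n)
    (p : ℝ × (Fin n → ℝ)) : pdS i f p = sgrad i f p :=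
  (hasDerivAt_pdS hf i p).deriv

lemma hasDerivAt_pd0 {f : ℝ × (Fin n → ℝ) → ℝ} (hf : Differentiable ℝ f)
    (p : ℝ × (Fin n → ℝ)) :
    HasDerivAt (fun s => f (s, p.2)) (fderiv ℝ f p ((1 : ℝ), (0 : Fin n → ℝ))) p.1 := by
  have h1 : HasDerivAt (fun s : ℝ => (s, p.2))
      (((1 : ℝ), (0 : Fin n → ℝ)) : ℝ × (Fin n → ℝ)) p.1 :=
    (hasDerivAt_id p.1).prodMk (hasDerivAt_const p.1 p.2)
  exact (hf p).hasFDerivAt.comp_hasDerivAt p.1 h1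

lemma pd0_eq {f : ℝ × (Fin n → ℝ) → ℝ} (hf : Differentiable ℝ f)
    (p : ℝ × (Fin n → ℝ)) : pd0 f p = fderiv ℝ f p ((1 : ℝ), (0 : Fin n → ℝ)) :=
  (hasDerivAt_pd0 hf p).deriv

lemma fderiv_slice {f : ℝ × (Fin n → ℝ) → ℝ} (hf : Differentiable ℝ f) (t : ℝ)
    (x w : Fin n → ℝ) :
    fderiv ℝ (fun y => f (t, y)) x w = fderiv ℝ f (t, x) ((0 : ℝ), w) := by
  have h1 : HasFDerivAt (fun y : Fin n → ℝ => ((t, y) : ℝ × (Fin n → ℝ)))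
      (((0 : (Fin n → ℝ) →L[ℝ] ℝ)).prod (ContinuousLinearMap.id ℝ (Fin n → ℝ))) x :=
    (hasFDerivAt_const t x).prodMk (hasFDerivAt_id x)
  have h2 := ((hf (t, x)).hasFDerivAt.comp x h1)
  have h3 : fderiv ℝ (fun y => f (t, y)) x
      = (fderiv ℝ f (t, x)).comp
        (((0 : (Fin n → ℝ) →L[ℝ] ℝ)).prod (ContinuousLinearMap.id ℝ (Fin n → ℝ))) := h2.fderiv
  rw [h3]
  simp

lemma sgrad_contDiff {f : ℝ × (Fin n → ℝ) → ℝ} (hf : ContDiff ℝ (⊤ : ℕ∞) f) (i : Fin n) :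
    ContDiff ℝ (⊤ : ℕ∞) (sgrad i f) :=
  (hf.fderiv_right (by simp)).clm_apply contDiff_const

lemma fderiv_fderiv_symm {f : ℝ × (Fin n → ℝ) → ℝ} (hf : ContDiff ℝ (⊤ : ℕ∞) f)
    (q v w : ℝ × (Fin n → ℝ)) :
    fderiv ℝ (fun q' => fderiv ℝ f q' w) q v = fderiv ℝ (fun q' => fderiv ℝ f q' v) q w := by
  have hdf : Differentiable ℝ (fderiv ℝ f) := (hf.fderiv_right (m := (⊤ : ℕ∞)) (by simp)).differentiable (by simp)
  have key : ∀ u : ℝ × (Fin n → ℝ), fderiv ℝ (fun q' => fderiv ℝ f q' u) q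
      = (ContinuousLinearMap.apply ℝ ℝ u).comp (fderiv ℝ (fderiv ℝ f) q) :=
    fun u => (((ContinuousLinearMap.apply ℝ ℝ u).hasFDerivAt).comp q (hdf q).hasFDerivAt).fderiv
  rw [key v, key w]
  simp only [ContinuousLinearMap.coe_comp', Function.comp_apply,
    ContinuousLinearMap.apply_apply]
  exact second_derivative_symmetric (fun y => (hf.differentiable (by simp) y).hasFDerivAt)
    (hdf q).hasFDerivAt v w

lemma sgrad_zero_off {K : Set (Fin n → ℝ)} (hK : IsClosed K)
    {f : ℝ × (Fin n → ℝ) → ℝ} (i : Fin n) {t : ℝ}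
    (h0 : ∀ y ∉ K, f (t, y) = 0) {x : Fin n → ℝ} (hx : x ∉ K)
    (hf : Differentiable ℝ f) :
    sgrad i f (t, x) = 0 := by
  have heq : (fun y => f (t, y)) =ᶠ[nhds x] fun _ => (0 : ℝ) := by
    filter_upwards [hK.isOpen_compl.mem_nhds hx] with y hy using h0 y hy
  have : fderiv ℝ (fun y => f (t, y)) x = 0 := by
    rw [heq.fderiv_eq]; exact fderiv_const_apply 0
  have h4 := fderiv_slice hf t x (Pi.single i 1)
  rw [this] at h4
  simpa [CPU.sgrad] using h4.symm

end CPU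

namespace CPU

variable {n : ℕ}

noncomputable def eden (μ : ℝ) (C₁ C₂ : ℝ × (Fin n → ℝ) → ℝ) (t : ℝ) (x : Fin n → ℝ) : ℝ :=
  μ * C₁ (t, x) ^ 2 + (∑ i : Fin n, (sgrad i C₁ (t, x)) ^ 2) + C₂ (t, x) ^ 2

noncomputable def eden' (μ : ℝ) (C₁ C₂ : ℝ × (Fin n → ℝ) → ℝ) (t : ℝ) (x : Fin n → ℝ) : ℝ :=
  2 * μ * C₁ (t, x) * C₂ (t, x)
    + (∑ i : Fin n, 2 * sgrad i C₁ (t, x) * sgrad i C₂ (t, x))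
    + 2 * C₂ (t, x) * (-μ * C₁ (t, x) + ∑ i : Fin n, sgrad i (sgrad i C₁) (t, x))

lemma lapS_eq {f : ℝ × (Fin n → ℝ) → ℝ} (hf : ContDiff ℝ (⊤ : ℕ∞) f) (p : ℝ × (Fin n → ℝ)) :
    lapS f p = ∑ i : Fin n, sgrad i (sgrad i f) p := by
  unfold lapS
  refine Finset.sum_congr rfl fun i _ => ?_
  have h1 : pdS i f = sgrad i f := funext fun q => pdS_eq (hf.differentiable (by simp)) i q
  rw [h1, pdS_eq ((sgrad_contDiff hf i).differentiable (by simp))]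

lemma eden_hasDerivAt {μ : ℝ} {C₁ C₂ : ℝ × (Fin n → ℝ) → ℝ}
    (hC₁ : ContDiff ℝ (⊤ : ℕ∞) C₁) (hC₂ : ContDiff ℝ (⊤ : ℕ∞) C₂)
    (e1 : ∀ p, pd0 C₁ p = C₂ p)
    (e2 : ∀ p, pd0 C₂ p = -μ * C₁ p + lapS C₁ p)
    (t : ℝ) (x : Fin n → ℝ) :
    HasDerivAt (fun s => eden μ C₁ C₂ s x) (eden' μ C₁ C₂ t x) t := by
  have hd1 : Differentiable ℝ C₁ := hC₁.differentiable (by simp)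
  have hd2 : Differentiable ℝ C₂ := hC₂.differentiable (by simp)
  have h1 : HasDerivAt (fun s => C₁ (s, x)) (C₂ (t, x)) t := by
    have h := hasDerivAt_pd0 hd1 (t, x)
    rwa [← pd0_eq hd1, e1] at h
  have h2 : HasDerivAt (fun s => C₂ (s, x))
      (-μ * C₁ (t, x) + ∑ i : Fin n, sgrad i (sgrad i C₁) (t, x)) t := by
    have h := hasDerivAt_pd0 hd2 (t, x)
    rwa [← pd0_eq hd2, e2, lapS_eq hC₁] at h
  have h3 : ∀ i : Fin n, HasDerivAt (fun s => sgrad i C₁ (s, x)) (sgrad i C₂ (t, x)) t := by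
    intro i
    have h := hasDerivAt_pd0 ((sgrad_contDiff hC₁ i).differentiable (by simp)) (t, x)
    have e : fderiv ℝ (sgrad i C₁) (t, x) ((1 : ℝ), (0 : Fin n → ℝ)) = sgrad i C₂ (t, x) := by
      show fderiv ℝ (fun q' => fderiv ℝ C₁ q' ((0 : ℝ), Pi.single i 1)) (t, x)
          ((1 : ℝ), (0 : Fin n → ℝ)) = fderiv ℝ C₂ (t, x) ((0 : ℝ), Pi.single i 1)
      rw [fderiv_fderiv_symm hC₁ (t, x) ((1 : ℝ), (0 : Fin n → ℝ)) ((0 : ℝ), Pi.single i 1)]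
      have h7 : (fun q' => fderiv ℝ C₁ q' ((1 : ℝ), (0 : Fin n → ℝ))) = C₂ := by
        funext q; rw [← pd0_eq hd1, e1]
      rw [h7]
    rw [e] at h
    exact h
  have H := (((h1.pow 2).const_mul μ).add
      (HasDerivAt.sum (fun i (_ : i ∈ Finset.univ) => (h3 i).pow 2))).add (h2.pow 2)
  simp only [eden]
  convert H using 1
  · rfl
  · rfl
  · ext s; simp [Finset.sum_apply]
  simp only [eden']
  have hsc : ∀ i : Fin n, (2 : ℝ) * sgrad i C₁ (t, x) * sgrad i C₂ (t, x)
      = ((2 : ℕ) : ℝ) * sgrad i C₁ (t, x) ^ (2 - 1) * sgrad i C₂ (t, x) := by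
    intro i; norm_num
  rw [Finset.sum_congr rfl (fun i _ => hsc i)]
  push_cast
  ring

end CPU

open CPU

/-- Smooth solutions of the constraint-propagation system `∂₀C₁ = C₂`,
`∂₀C₂ = −μC₁ + ΔC₁` (with `μ > 0`) which are spatially compactly supported on
compact time intervals and vanish at time `0` vanish identically. -/
theorem constraint_propagation_uniqueness {n : ℕ} (hn : 1 ≤ n) (μ : ℝ) (hμ : 0 < μ)
    (C₁ C₂ : ℝ × (Fin n → ℝ) → ℝ)
    (hC₁ : ContDiff ℝ (⊤ : ℕ∞) C₁) (hC₂ : ContDiff ℝ (⊤ : ℕ∞) C₂)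
    (hsupp : ∀ I : Set ℝ, IsCompact I → ∃ K : Set (Fin n → ℝ), IsCompact K ∧
        ∀ t ∈ I, ∀ x : Fin n → ℝ, x ∉ K → C₁ (t, x) = 0 ∧ C₂ (t, x) = 0)
    (e1 : ∀ p, pd0 C₁ p = C₂ p)
    (e2 : ∀ p, pd0 C₂ p = -μ * C₁ p + lapS C₁ p)
    (h10 : ∀ x : Fin n → ℝ, C₁ (0, x) = 0)
    (h20 : ∀ x : Fin n → ℝ, C₂ (0, x) = 0) :
    ∀ p : ℝ × (Fin n → ℝ), C₁ p = 0 ∧ C₂ p = 0 := by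
  classical
  have hd1 : Differentiable ℝ C₁ := hC₁.differentiable (by simp)
  have hd2 : Differentiable ℝ C₂ := hC₂.differentiable (by simp)
  -- continuity facts
  have hcont_eden : ∀ t : ℝ, Continuous (fun x => eden μ C₁ C₂ t x) := by
    intro t
    exact ((continuous_const.mul
        ((hC₁.continuous.comp (Continuous.prodMk_right t)).pow 2)).add
      (continuous_finset_sum _ fun i _ =>
        ((sgrad_contDiff hC₁ i).continuous.comp (Continuous.prodMk_right t)).pow 2)).add
      ((hC₂.continuous.comp (Continuous.prodMk_right t)).pow 2)
  have hED' : Continuous (fun q : ℝ × (Fin n → ℝ) => eden' μ C₁ C₂ q.1 q.2) := by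
    simp only [eden', Prod.mk.eta]
    exact (((continuous_const.mul hC₁.continuous).mul hC₂.continuous).add
      (continuous_finset_sum _ fun i _ =>
        (continuous_const.mul (sgrad_contDiff hC₁ i).continuous).mul
          (sgrad_contDiff hC₂ i).continuous)).add
      ((continuous_const.mul hC₂.continuous).mul
        ((continuous_const.mul hC₁.continuous).add
          (continuous_finset_sum _ fun i _ =>
            (sgrad_contDiff (sgrad_contDiff hC₁ i) i).continuous)))
  set En : ℝ → ℝ := fun t => ∫ x : Fin n → ℝ, eden μ C₁ C₂ t x with hEn
  have hEd : ∀ t₀ : ℝ, HasDerivAt En 0 t₀ := by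
    intro t₀
    obtain ⟨K, hKc, hK⟩ := hsupp (Set.Icc (t₀ - 1) (t₀ + 1)) isCompact_Icc
    have hKcl : IsClosed K := hKc.isClosed
    have hball : Metric.ball t₀ 1 ⊆ Set.Icc (t₀ - 1) (t₀ + 1) := by
      rw [Real.ball_eq_Ioo]; exact Set.Ioo_subset_Icc_self
    have ht₀I : t₀ ∈ Set.Icc (t₀ - 1) (t₀ + 1) := ⟨by linarith, by linarith⟩
    have hvan : ∀ t ∈ Set.Icc (t₀ - 1) (t₀ + 1), ∀ x ∉ K, C₁ (t, x) = 0 ∧ C₂ (t, x) = 0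
        ∧ ∀ i : Fin n, sgrad i C₁ (t, x) = 0 ∧ sgrad i C₂ (t, x) = 0 ∧
          sgrad i (sgrad i C₁) (t, x) = 0 := by
      intro t ht x hx
      refine ⟨(hK t ht x hx).1, (hK t ht x hx).2, fun i => ⟨?_, ?_, ?_⟩⟩
      · exact sgrad_zero_off hKcl i (fun y hy => (hK t ht y hy).1) hx hd1
      · exact sgrad_zero_off hKcl i (fun y hy => (hK t ht y hy).2) hx hd2
      · exact sgrad_zero_off hKcl i
          (fun y hy => sgrad_zero_off hKcl i (fun z hz => (hK t ht z hz).1) hy hd1) hx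
          ((sgrad_contDiff hC₁ i).differentiable (by simp))
    have heden'0 : ∀ t ∈ Set.Icc (t₀ - 1) (t₀ + 1), ∀ x ∉ K, eden' μ C₁ C₂ t x = 0 := by
      intro t ht x hx
      obtain ⟨a1, a2, a3⟩ := hvan t ht x hx
      simp only [eden', a1, a2]
      rw [Finset.sum_eq_zero (fun i _ => by rw [(a3 i).1]; ring)]
      ring
    obtain ⟨M, hM⟩ := (isCompact_Icc.prod hKc).exists_bound_of_continuousOn hED'.continuousOn
    have main : Integrable (fun x : Fin n → ℝ => eden' μ C₁ C₂ t₀ x) volume ∧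
        HasDerivAt (fun t => ∫ x : Fin n → ℝ, eden μ C₁ C₂ t x)
          (∫ x : Fin n → ℝ, eden' μ C₁ C₂ t₀ x) t₀ := by
      refine hasDerivAt_integral_of_dominated_loc_of_deriv_le
        (F' := fun t x => eden' μ C₁ C₂ t x) (bound := K.indicator fun _ => M) (Metric.ball_mem_nhds t₀ one_pos)
        (Filter.Eventually.of_forall fun t => (hcont_eden t).aestronglyMeasurable) ?_ ?_ ?_ ?_ ?_
      · apply (hcont_eden t₀).integrable_of_hasCompactSupport
        apply HasCompactSupport.intro hKc
        intro x hx
        obtain ⟨a1, a2, a3⟩ := hvan t₀ ht₀I x hx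
        simp only [eden, a1, a2]
        rw [Finset.sum_eq_zero (fun i _ => by rw [(a3 i).1]; ring)]
        ring
      · exact (hED'.comp (Continuous.prodMk_right t₀)).aestronglyMeasurable
      · refine Filter.Eventually.of_forall fun x t ht => ?_
        by_cases hx : x ∈ K
        · have hb := hM (t, x) (Set.mk_mem_prod (hball ht) hx)
          simpa [Set.indicator_of_mem hx] using hb
        · have h0 := heden'0 t (hball ht) x hx
          simp [Set.indicator_of_notMem hx, h0]
      · rw [integrable_indicator_iff hKc.measurableSet]
        exact integrableOn_const hKc.measure_lt_top.ne
      · exact Filter.Eventually.of_forall fun x t ht =>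
          eden_hasDerivAt hC₁ hC₂ e1 e2 t x
    -- the spatial integral of the time derivative vanishes (integration by parts)
    have intK : ∀ g : (Fin n → ℝ) → ℝ, Continuous g → (∀ x ∉ K, g x = 0) → Integrable g :=
      fun g hg h0 => hg.integrable_of_hasCompactSupport (HasCompactSupport.intro hKc h0)
    have cC2 : Continuous fun y : Fin n → ℝ => C₂ (t₀, y) :=
      hC₂.continuous.comp (Continuous.prodMk_right t₀)
    have cV : ∀ i : Fin n, Continuous fun y : Fin n → ℝ => sgrad i C₁ (t₀, y) := fun i =>
      (sgrad_contDiff hC₁ i).continuous.comp (Continuous.prodMk_right t₀)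
    have cW : ∀ i : Fin n, Continuous fun y : Fin n → ℝ => sgrad i C₂ (t₀, y) := fun i =>
      (sgrad_contDiff hC₂ i).continuous.comp (Continuous.prodMk_right t₀)
    have cL : ∀ i : Fin n, Continuous fun y : Fin n → ℝ => sgrad i (sgrad i C₁) (t₀, y) :=
      fun i => (sgrad_contDiff (sgrad_contDiff hC₁ i) i).continuous.comp (Continuous.prodMk_right t₀)
    have hsplit : ∀ x : Fin n → ℝ, eden' μ C₁ C₂ t₀ x
        = ∑ i : Fin n, (2 * (sgrad i C₂ (t₀, x) * sgrad i C₁ (t₀, x))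
            + 2 * (C₂ (t₀, x) * sgrad i (sgrad i C₁) (t₀, x))) := by
      intro x
      simp only [eden']
      have hA : ∑ i : Fin n, 2 * (sgrad i C₂ (t₀, x) * sgrad i C₁ (t₀, x))
          = ∑ i : Fin n, 2 * sgrad i C₁ (t₀, x) * sgrad i C₂ (t₀, x) :=
        Finset.sum_congr rfl fun i _ => by ring
      have hB : ∑ i : Fin n, 2 * (C₂ (t₀, x) * sgrad i (sgrad i C₁) (t₀, x))
          = 2 * C₂ (t₀, x) * ∑ i : Fin n, sgrad i (sgrad i C₁) (t₀, x) := by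
        rw [Finset.mul_sum]
        exact Finset.sum_congr rfl fun i _ => by ring
      rw [Finset.sum_add_distrib, hA, hB]
      ring
    have hint1 : ∀ i : Fin n,
        Integrable fun x : Fin n → ℝ => sgrad i C₂ (t₀, x) * sgrad i C₁ (t₀, x) :=
      fun i => intK _ ((cW i).mul (cV i)) (fun x hx => by
        rw [((hvan t₀ ht₀I x hx).2.2 i).1]; ring)
    have hint2 : ∀ i : Fin n,
        Integrable fun x : Fin n → ℝ => C₂ (t₀, x) * sgrad i (sgrad i C₁) (t₀, x) :=
      fun i => intK _ (cC2.mul (cL i)) (fun x hx => by rw [(hvan t₀ ht₀I x hx).2.1]; ring)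
    have key : ∀ i : Fin n, ∫ x : Fin n → ℝ, C₂ (t₀, x) * sgrad i (sgrad i C₁) (t₀, x)
        = - ∫ x : Fin n → ℝ, sgrad i C₂ (t₀, x) * sgrad i C₁ (t₀, x) := by
      intro i
      have hf' : ∀ x, fderiv ℝ (fun y => C₂ (t₀, y)) x (Pi.single i 1) = sgrad i C₂ (t₀, x) :=
        fun x => fderiv_slice hd2 t₀ x _
      have hg' : ∀ x, fderiv ℝ (fun y => sgrad i C₁ (t₀, y)) x (Pi.single i 1)
          = sgrad i (sgrad i C₁) (t₀, x) :=
        fun x => fderiv_slice ((sgrad_contDiff hC₁ i).differentiable (by simp)) t₀ x _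
      have h := integral_mul_fderiv_eq_neg_fderiv_mul_of_integrable
        (f := fun y : Fin n → ℝ => C₂ (t₀, y)) (g := fun y : Fin n → ℝ => sgrad i C₁ (t₀, y))
        (v := (Pi.single i 1 : Fin n → ℝ)) (μ := volume) ?_ ?_ ?_ ?_ ?_
      · simp only [hf', hg'] at h
        exact h
      · have he : (fun x : Fin n → ℝ =>
            fderiv ℝ (fun y => C₂ (t₀, y)) x (Pi.single i 1) * sgrad i C₁ (t₀, x))
            = fun x => sgrad i C₂ (t₀, x) * sgrad i C₁ (t₀, x) := funext fun x => by rw [hf' x]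
        rw [he]; exact hint1 i
      · have he : (fun x : Fin n → ℝ =>
            C₂ (t₀, x) * fderiv ℝ (fun y => sgrad i C₁ (t₀, y)) x (Pi.single i 1))
            = fun x => C₂ (t₀, x) * sgrad i (sgrad i C₁) (t₀, x) := funext fun x => by rw [hg' x]
        rw [he]; exact hint2 i
      · exact intK _ (cC2.mul (cV i)) (fun x hx => by simp [(hvan t₀ ht₀I x hx).2.1])
      · exact fun x _ => hd2.comp ((differentiable_const t₀).prodMk differentiable_id) x
      · exact fun x _ => ((sgrad_contDiff hC₁ i).differentiable (by simp)).comp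
          ((differentiable_const t₀).prodMk differentiable_id) x
    have hIBP : ∫ x : Fin n → ℝ, eden' μ C₁ C₂ t₀ x = 0 := by
      calc ∫ x : Fin n → ℝ, eden' μ C₁ C₂ t₀ x
          = ∫ x : Fin n → ℝ, ∑ i : Fin n, (2 * (sgrad i C₂ (t₀, x) * sgrad i C₁ (t₀, x))
              + 2 * (C₂ (t₀, x) * sgrad i (sgrad i C₁) (t₀, x))) := by simp only [hsplit]
        _ = ∑ i : Fin n, ∫ x : Fin n → ℝ, (2 * (sgrad i C₂ (t₀, x) * sgrad i C₁ (t₀, x))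
              + 2 * (C₂ (t₀, x) * sgrad i (sgrad i C₁) (t₀, x))) :=
            integral_finset_sum _ (fun i _ => (((hint1 i).const_mul 2).add
              ((hint2 i).const_mul 2)))
        _ = 0 := Finset.sum_eq_zero fun i _ => by
            rw [integral_add ((hint1 i).const_mul 2) ((hint2 i).const_mul 2),
              integral_const_mul, integral_const_mul, key i]
            ring
    have hDer := main.2
    rw [hIBP] at hDer
    exact hDer
  have hconst : ∀ t : ℝ, En t = En 0 := fun t =>
    is_const_of_deriv_eq_zero (fun s => (hEd s).differentiableAt) (fun s => (hEd s).deriv) t 0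
  have hEn0 : En 0 = 0 := by
    have hz : ∀ x : Fin n → ℝ, eden μ C₁ C₂ 0 x = 0 := by
      intro x
      have hV0 : ∀ i : Fin n, sgrad i C₁ ((0 : ℝ), x) = 0 := by
        intro i
        have h4 : sgrad i C₁ ((0 : ℝ), x)
            = fderiv ℝ (fun y => C₁ ((0 : ℝ), y)) x (Pi.single i 1) :=
          (fderiv_slice hd1 0 x _).symm
        have hs : (fun y : Fin n → ℝ => C₁ ((0 : ℝ), y)) = fun _ => (0 : ℝ) :=
          funext fun y => h10 y
        rw [h4, hs]
        simp
      simp [eden, hV0, h10 x, h20 x]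
    rw [hEn]
    simp only [hz, integral_zero]
  rintro ⟨t, x⟩
  obtain ⟨K, hKc, hK⟩ := hsupp {t} isCompact_singleton
  have hKcl : IsClosed K := hKc.isClosed
  have hint : Integrable (fun y : Fin n → ℝ => eden μ C₁ C₂ t y) := by
    apply (hcont_eden t).integrable_of_hasCompactSupport
    apply HasCompactSupport.intro hKc
    intro y hy
    have a1 := (hK t rfl y hy).1
    have a2 := (hK t rfl y hy).2
    have a3 : ∀ i : Fin n, sgrad i C₁ (t, y) = 0 := fun i =>
      sgrad_zero_off hKcl i (fun z hz => (hK t rfl z hz).1) hy hd1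
    simp [eden, a1, a2, a3]
  have hz : ∫ y : Fin n → ℝ, eden μ C₁ C₂ t y = 0 := (hconst t).trans hEn0
  have hnn : ∀ y, 0 ≤ eden μ C₁ C₂ t y := by
    intro y
    have hS : 0 ≤ ∑ i : Fin n, (sgrad i C₁ (t, y)) ^ 2 :=
      Finset.sum_nonneg fun i _ => sq_nonneg _
    have h1 := sq_nonneg (C₁ (t, y)); have h2 := sq_nonneg (C₂ (t, y))
    simp only [eden]; nlinarith
  have hae := (MeasureTheory.integral_eq_zero_iff_of_nonneg hnn hint).1 hz
  have hfun : (fun y : Fin n → ℝ => eden μ C₁ C₂ t y) = 0 :=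
    ((hcont_eden t).ae_eq_iff_eq volume continuous_zero).1 hae
  have h0x : eden μ C₁ C₂ t x = 0 := congrFun hfun x
  have hS : 0 ≤ ∑ i : Fin n, (sgrad i C₁ (t, x)) ^ 2 :=
    Finset.sum_nonneg fun i _ => sq_nonneg _
  simp only [eden] at h0x
  constructor
  · have hq : C₁ (t, x) ^ 2 = 0 := by
      nlinarith [sq_nonneg (C₁ (t, x)), sq_nonneg (C₂ (t, x))]
    exact pow_eq_zero_iff two_ne_zero |>.1 hq
  · have hq : C₂ (t, x) ^ 2 = 0 := by
      nlinarith [sq_nonneg (C₁ (t, x)), sq_nonneg (C₂ (t, x))]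
    exact pow_eq_zero_iff two_ne_zero |>.1 hq
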